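/- The hazard function of the beta normal distribution satisfies h(x)/x → β/σ² as x → ∞, where h(x) = f(x)/(1 - F(x)) with f the BN(α,β,μ,σ) density and F its cdf. -/

import Mathlib

open Real Filter Set

noncomputable def phi (z : ℝ) : ℝ := Real.exp (-z^2/2) / Real.sqrt (2*Real.pi)
noncomputable def Phi (z : ℝ) : ℝ := ∫ t in Set.Iic z, phi t
noncomputable def betaF (a b : ℝ) : ℝ := ∫ w in (0:ℝ)..1, w^(a-1) * (1-w)^(b-1)
noncomputable def bsn (a b z : ℝ) : ℝ := phi z * Phi z ^ (a-1) * (1 - Phi z) ^ (b-1) / betaF a b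
noncomputable def regInc (x a b : ℝ) : ℝ := (∫ w in (0:ℝ)..x, w^(a-1) * (1-w)^(b-1)) / betaF a b

noncomputable def bnPdf (a b μ σ x : ℝ) : ℝ :=
  Phi ((x-μ)/σ) ^ (a-1) * (1 - Phi ((x-μ)/σ)) ^ (b-1) * phi ((x-μ)/σ) / (σ * betaF a b)

open MeasureTheory intervalIntegral Topology

section Aux

lemma phi_pos (z : ℝ) : 0 < phi z :=
  div_pos (Real.exp_pos _) (Real.sqrt_pos.2 (by positivity))

lemma phi_eq (t : ℝ) : phi t = Real.exp (-(1/2) * t^2) / Real.sqrt (2*Real.pi) := by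
  unfold phi; ring_nf

lemma continuous_phi : Continuous phi := by
  unfold phi; fun_prop

lemma integrable_phi : Integrable phi := by
  have h := (integrable_exp_neg_mul_sq (b := 1/2) (by norm_num)).div_const (Real.sqrt (2*Real.pi))
  exact h.congr (by filter_upwards with t using (phi_eq t).symm)

lemma integral_phi : ∫ t, phi t = 1 := by
  have h : ∫ t, phi t = (∫ t : ℝ, Real.exp (-(1/2) * t^2)) / Real.sqrt (2*Real.pi) := by
    simp_rw [phi_eq]
    exact integral_div _ _
  rw [h, integral_gaussian]
  rw [show (π : ℝ) / (1/2) = 2 * π by ring]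
  rw [div_self (by positivity)]

lemma hasDerivAt_phi (z : ℝ) : HasDerivAt phi (-z * phi z) z := by
  unfold phi
  have h1 : HasDerivAt (fun z : ℝ => -z^2/2) (-z) z := by
    have := ((hasDerivAt_pow 2 z).neg).div_const 2
    exact this.congr_deriv (by norm_num; ring)
  have h2 := (h1.exp).div_const (Real.sqrt (2*Real.pi))
  exact h2.congr_deriv (by ring)

lemma hasDerivAt_Phi (z : ℝ) : HasDerivAt Phi (phi z) z := by
  have heq : Phi = fun x => Phi 0 + ∫ t in (0:ℝ)..x, phi t := by
    funext x
    rw [← intervalIntegral.integral_Iic_sub_Iic integrable_phi.integrableOn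
      integrable_phi.integrableOn]
    unfold Phi; ring
  rw [heq]
  have := intervalIntegral.integral_hasDerivAt_right
    (continuous_phi.intervalIntegrable 0 z)
    (continuous_phi.stronglyMeasurableAtFilter _ _)
    continuous_phi.continuousAt
  exact this.const_add _

lemma Phi_strictMono : StrictMono Phi := by
  apply strictMono_of_deriv_pos
  intro x
  rw [(hasDerivAt_Phi x).deriv]
  exact phi_pos x

lemma Phi_tendsto : Tendsto Phi atTop (𝓝 1) := by
  have h := MeasureTheory.tendsto_setIntegral_of_monotone
    (s := fun z : ℝ => Iic z) (fun i => measurableSet_Iic)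
    (fun i j hij => Iic_subset_Iic.2 hij)
    (by rw [iUnion_Iic]; exact integrable_phi.integrableOn)
  rw [iUnion_Iic] at h
  exact (by simpa [integral_phi] using h : Tendsto (fun i => ∫ x in Iic i, phi x) atTop (𝓝 1))

lemma Phi_lt_one (z : ℝ) : Phi z < 1 := by
  have h1 : Phi (z+1) ≤ 1 := Phi_strictMono.monotone.ge_of_tendsto Phi_tendsto (z+1)
  exact lt_of_lt_of_le (Phi_strictMono (by linarith)) h1

lemma Phi_nonneg (z : ℝ) : 0 ≤ Phi z :=
  setIntegral_nonneg measurableSet_Iic (fun t _ => (phi_pos t).le)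

lemma Phi_pos (z : ℝ) : 0 < Phi z := by
  have h : Phi (z-1) < Phi z := Phi_strictMono (by linarith)
  exact lt_of_le_of_lt (Phi_nonneg (z-1)) h

lemma phi_tendsto_zero : Tendsto phi atTop (𝓝 0) := by
  have h1 : Tendsto (fun z : ℝ => -z^2/2) atTop atBot := by
    apply Tendsto.atBot_div_const (by norm_num : (0:ℝ) < 2)
    exact tendsto_neg_atTop_atBot.comp (tendsto_pow_atTop two_ne_zero)
  have h2 := Real.tendsto_exp_atBot.comp h1
  have h3 := h2.div_const (Real.sqrt (2*Real.pi))
  rw [zero_div] at h3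
  exact h3.congr fun z => rfl

lemma mill : Tendsto (fun z => (1 - Phi z) / (phi z / z)) atTop (𝓝 1) := by
  have hz1 : ∀ᶠ z : ℝ in atTop, (1:ℝ) ≤ z := eventually_ge_atTop 1
  apply HasDerivAt.lhopital_zero_atTop
    (f' := fun z => -phi z)
    (g' := fun z => (-z * phi z * z - phi z * 1) / z^2)
  · filter_upwards with z
    exact (hasDerivAt_Phi z).const_sub 1
  · filter_upwards [hz1] with z hz
    exact (hasDerivAt_phi z).div (hasDerivAt_id z) (by linarith)
  · filter_upwards [hz1] with z hz
    have hφ := phi_pos z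
    have : -z * phi z * z - phi z * 1 < 0 := by
      nlinarith [mul_pos (mul_pos (show (0:ℝ) < z by linarith) hφ) (show (0:ℝ) < z by linarith)]
    exact div_ne_zero this.ne (by positivity)
  · have := (tendsto_const_nhds : Tendsto (fun _ : ℝ => (1:ℝ)) atTop (𝓝 1)).sub Phi_tendsto
    simpa using this
  · have := phi_tendsto_zero.mul tendsto_inv_atTop_zero
    simpa [div_eq_mul_inv] using this
  · have key : Tendsto (fun z : ℝ => z^2 / (z^2 + 1)) atTop (𝓝 1) := by
      have h1 : Tendsto (fun z : ℝ => z^2 + 1) atTop atTop :=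
        tendsto_atTop_add_const_right _ 1 (tendsto_pow_atTop two_ne_zero)
      have h2 : Tendsto (fun z : ℝ => 1 - 1/(z^2+1)) atTop (𝓝 1) := by
        have hinv : Tendsto (fun z : ℝ => 1/(z^2+1)) atTop (𝓝 0) := by
          simpa [one_div, Function.comp_def] using tendsto_inv_atTop_zero.comp h1
        simpa using (tendsto_const_nhds : Tendsto (fun _ : ℝ => (1:ℝ)) atTop (𝓝 1)).sub hinv
      apply h2.congr'
      filter_upwards [eventually_ge_atTop (1:ℝ)] with z hz
      have : z^2 + 1 ≠ 0 := by positivity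
      field_simp
      ring
    apply key.congr'
    filter_upwards [hz1] with z hz
    have hφ := phi_pos z
    have hd : -z * phi z * z - phi z * 1 < 0 := by
      nlinarith [mul_pos (mul_pos (show (0:ℝ) < z by linarith) hφ) (show (0:ℝ) < z by linarith)]
    rw [div_div_eq_mul_div, div_eq_div_iff (by positivity) hd.ne]
    ring
variable {a b : ℝ}

lemma integrableOn_beta (ha : 0 < a) (hb : 0 < b) :
    IntegrableOn (fun w : ℝ => w^(a-1) * (1-w)^(b-1)) (Ioc 0 1) := by
  have hmeas : Measurable (fun w : ℝ => w^(a-1) * (1-w)^(b-1)) :=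
    (measurable_id.pow_const (a-1)).mul ((measurable_const.sub measurable_id).pow_const (b-1))
  have h1 : IntegrableOn (fun w : ℝ => w^(a-1) * (1-w)^(b-1)) (Ioc 0 (1/2)) := by
    have hint1 : IntegrableOn (fun w : ℝ => w ^ (a-1)) (Ioc 0 (1/2)) := by
      have := intervalIntegrable_rpow' (a := 0) (b := 1/2) (show (-1:ℝ) < a-1 by linarith)
      rwa [intervalIntegrable_iff_integrableOn_Ioc_of_le (by norm_num)] at this
    set M := max 1 ((1/2:ℝ)^(b-1)) with hM
    refine Integrable.mono' (hint1.const_mul M) hmeas.aestronglyMeasurable ?_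
    filter_upwards [ae_restrict_mem measurableSet_Ioc] with w hw
    have hw1 : (0:ℝ) < w := hw.1
    have h1w : (1/2:ℝ) ≤ 1 - w := by linarith [hw.2]
    have hle : (1-w)^(b-1) ≤ M := by
      rcases le_or_gt 0 (b-1) with h|h
      · refine le_trans ?_ (le_max_left _ _)
        calc (1-w)^(b-1) ≤ (1:ℝ)^(b-1) := Real.rpow_le_rpow (by linarith) (by linarith) h
          _ = 1 := Real.one_rpow _
      · exact le_trans (Real.rpow_le_rpow_of_nonpos (by norm_num) h1w h.le) (le_max_right _ _)
    rw [Real.norm_eq_abs, abs_of_nonneg (mul_nonneg (Real.rpow_nonneg hw1.le _)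
      (Real.rpow_nonneg (by linarith) _))]
    calc w^(a-1) * (1-w)^(b-1) ≤ w^(a-1) * M :=
          mul_le_mul_of_nonneg_left hle (Real.rpow_nonneg hw1.le _)
      _ = M * w^(a-1) := mul_comm _ _
  have h2 : IntegrableOn (fun w : ℝ => w^(a-1) * (1-w)^(b-1)) (Ioc (1/2) 1) := by
    have hint2 : IntegrableOn (fun w : ℝ => (1-w) ^ (b-1)) (Ioc (1/2) 1) := by
      have h0 : IntervalIntegrable (fun x : ℝ => x^(b-1)) volume 0 (1/2) :=
        intervalIntegrable_rpow' (by linarith)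
      have h2 := (h0.comp_sub_left 1).symm
      norm_num at h2
      rwa [intervalIntegrable_iff_integrableOn_Ioc_of_le (by norm_num)] at h2
    set M := max 1 ((1/2:ℝ)^(a-1)) with hM
    refine Integrable.mono' (hint2.const_mul M) hmeas.aestronglyMeasurable ?_
    filter_upwards [ae_restrict_mem measurableSet_Ioc] with w hw
    have hw1 : (1/2:ℝ) ≤ w := hw.1.le
    have h1w : (0:ℝ) ≤ 1 - w := by linarith [hw.2]
    have hle : w^(a-1) ≤ M := by
      rcases le_or_gt 0 (a-1) with h|h
      · refine le_trans ?_ (le_max_left _ _)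
        calc w^(a-1) ≤ (1:ℝ)^(a-1) := Real.rpow_le_rpow (by linarith) hw.2 h
          _ = 1 := Real.one_rpow _
      · exact le_trans (Real.rpow_le_rpow_of_nonpos (by norm_num) hw1 h.le) (le_max_right _ _)
    rw [Real.norm_eq_abs, abs_of_nonneg (mul_nonneg (Real.rpow_nonneg (by linarith) _)
      (Real.rpow_nonneg h1w _))]
    exact mul_le_mul_of_nonneg_right hle (Real.rpow_nonneg h1w _)
  rw [show Ioc (0:ℝ) 1 = Ioc 0 (1/2) ∪ Ioc (1/2) 1 from
    (Set.Ioc_union_Ioc_eq_Ioc (by norm_num) (by norm_num)).symm]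
  exact h1.union h2

lemma intervalIntegrable_beta (ha : 0 < a) (hb : 0 < b) :
    IntervalIntegrable (fun w : ℝ => w^(a-1) * (1-w)^(b-1)) volume 0 1 := by
  rw [intervalIntegrable_iff_integrableOn_Ioc_of_le zero_le_one]
  exact integrableOn_beta ha hb

lemma intervalIntegrable_beta_left (ha : 0 < a) (hb : 0 < b) {p : ℝ} (hp0 : 0 ≤ p) (hp1 : p ≤ 1) :
    IntervalIntegrable (fun w : ℝ => w^(a-1) * (1-w)^(b-1)) volume 0 p := by
  apply (intervalIntegrable_beta ha hb).mono_set
  rw [uIcc_of_le hp0, uIcc_of_le zero_le_one]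
  exact Icc_subset_Icc le_rfl hp1

lemma intervalIntegrable_beta_right (ha : 0 < a) (hb : 0 < b) {p : ℝ} (hp0 : 0 ≤ p) (hp1 : p ≤ 1) :
    IntervalIntegrable (fun w : ℝ => w^(a-1) * (1-w)^(b-1)) volume p 1 := by
  apply (intervalIntegrable_beta ha hb).mono_set
  rw [uIcc_of_le hp1, uIcc_of_le zero_le_one]
  exact Icc_subset_Icc hp0 le_rfl

lemma betaF_pos (ha : 0 < a) (hb : 0 < b) : 0 < betaF a b := by
  apply intervalIntegral_pos_of_pos_on (intervalIntegrable_beta ha hb) _ zero_lt_one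
  intro x hx
  exact mul_pos (Real.rpow_pos_of_pos hx.1 _) (Real.rpow_pos_of_pos (by linarith [hx.2]) _)

lemma beta_split (ha : 0 < a) (hb : 0 < b) {p : ℝ} (hp0 : 0 ≤ p) (hp1 : p ≤ 1) :
    (∫ w in (0:ℝ)..p, w^(a-1) * (1-w)^(b-1)) + ∫ w in p..(1:ℝ), w^(a-1) * (1-w)^(b-1)
      = betaF a b :=
  integral_add_adjacent_intervals (intervalIntegrable_beta_left ha hb hp0 hp1)
    (intervalIntegrable_beta_right ha hb hp0 hp1)

lemma tail_pos (ha : 0 < a) (hb : 0 < b) {p : ℝ} (hp0 : 0 ≤ p) (hp1 : p < 1) :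
    0 < ∫ w in p..(1:ℝ), w^(a-1) * (1-w)^(b-1) := by
  apply intervalIntegral_pos_of_pos_on (intervalIntegrable_beta_right ha hb hp0 hp1.le) _ hp1
  intro x hx
  exact mul_pos (Real.rpow_pos_of_pos (lt_of_le_of_lt hp0 hx.1) _)
    (Real.rpow_pos_of_pos (by linarith [hx.2]) _)

lemma betaTail (ha : 0 < a) (hb : 0 < b) :
    Tendsto (fun p => ((1-p)^b / b) / ∫ w in p..(1:ℝ), w^(a-1) * (1-w)^(b-1))
      (𝓝[<] (1:ℝ)) (𝓝 1) := by
  have hev : ∀ᶠ p in 𝓝[<] (1:ℝ), p ∈ Ioo (0:ℝ) 1 := by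
    rw [← nhdsWithin_Ioo_eq_nhdsLT (zero_lt_one)]
    exact self_mem_nhdsWithin
  have hsub : ∀ q ∈ Ioo (0:ℝ) 1,
      (∫ w in q..(1:ℝ), w^(a-1) * (1-w)^(b-1))
        = betaF a b - ∫ w in (0:ℝ)..q, w^(a-1) * (1-w)^(b-1) := by
    intro q hq
    rw [← beta_split ha hb hq.1.le hq.2.le]; ring
  apply HasDerivAt.lhopital_zero_nhdsLT
    (f' := fun p => b * (1-p)^(b-1) * (-1) / b)
    (g' := fun p => -(p^(a-1) * (1-p)^(b-1)))
  · filter_upwards [hev] with p hp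
    have h1p : (0:ℝ) < 1 - p := by linarith [hp.2]
    have hrp := Real.hasDerivAt_rpow_const (x := 1-p) (p := b) (Or.inl h1p.ne')
    have hlin : HasDerivAt (fun p : ℝ => 1 - p) (-1) p := (hasDerivAt_id p).const_sub 1
    exact (hrp.comp p hlin).div_const b
  · filter_upwards [hev] with p hp
    have h1p : (0:ℝ) < 1 - p := by linarith [hp.2]
    have hcont : ContinuousAt (fun w : ℝ => w^(a-1) * (1-w)^(b-1)) p := by
      apply ContinuousAt.mul
      · exact Real.continuousAt_rpow_const p (a-1) (Or.inl hp.1.ne')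
      · exact (Real.continuousAt_rpow_const (1-p) (b-1) (Or.inl h1p.ne')).comp
          ((continuous_const.sub continuous_id).continuousAt)
    have hprim : HasDerivAt (fun q => ∫ w in (0:ℝ)..q, w^(a-1) * (1-w)^(b-1))
        (p^(a-1) * (1-p)^(b-1)) p := by
      apply intervalIntegral.integral_hasDerivAt_right
        (intervalIntegrable_beta_left ha hb hp.1.le hp.2.le)
        (((measurable_id.pow_const (a-1)).mul
          ((measurable_const.sub measurable_id).pow_const (b-1))).stronglyMeasurable.stronglyMeasurableAtFilter)
        hcont
    apply (hprim.const_sub (betaF a b)).congr_of_eventuallyEq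
    filter_upwards [IsOpen.mem_nhds isOpen_Ioo hp] with q hq
    exact hsub q hq
  · filter_upwards [hev] with p hp
    have h1p : (0:ℝ) < 1 - p := by linarith [hp.2]
    exact neg_ne_zero.2 (mul_pos (Real.rpow_pos_of_pos hp.1 _)
      (Real.rpow_pos_of_pos h1p _)).ne'
  · have h1 : Tendsto (fun p : ℝ => 1 - p) (𝓝[<] (1:ℝ)) (𝓝 0) := by
      have hc : Continuous (fun p : ℝ => 1 - p) := continuous_const.sub continuous_id
      have := (hc.tendsto (1:ℝ)).mono_left (nhdsWithin_le_nhds (s := Iio (1:ℝ)))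
      simpa using this
    have h2 : ContinuousAt (fun x : ℝ => x ^ b) 0 :=
      Real.continuousAt_rpow_const 0 b (Or.inr hb.le)
    have h3 := h2.tendsto.comp h1
    rw [Real.zero_rpow hb.ne'] at h3
    simpa using h3.div_const b
  · have hicc : IntegrableOn (fun w : ℝ => w^(a-1) * (1-w)^(b-1)) (uIcc 0 1) := by
      rw [uIcc_of_le zero_le_one, integrableOn_Icc_iff_integrableOn_Ioc]
      exact integrableOn_beta ha hb
    have hcont := intervalIntegral.continuousOn_primitive_interval hicc
    rw [uIcc_of_le zero_le_one] at hcont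
    have h4 : Tendsto (fun q => ∫ w in (0:ℝ)..q, w^(a-1) * (1-w)^(b-1)) (𝓝[<] (1:ℝ))
        (𝓝 (betaF a b)) := by
      have h5 := (hcont 1 (by norm_num)).tendsto
      have h6 : (𝓝[<] (1:ℝ)) ≤ 𝓝[Icc (0:ℝ) 1] 1 := by
        rw [← nhdsWithin_Ioo_eq_nhdsLT (zero_lt_one)]
        exact nhdsWithin_mono _ Ioo_subset_Icc_self
      have h7 := h5.mono_left h6
      rwa [show (∫ w in (0:ℝ)..(1:ℝ), w^(a-1) * (1-w)^(b-1)) = betaF a b from rfl] at h7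
    have h8 := (tendsto_const_nhds (x := betaF a b)).sub h4
    rw [sub_self] at h8
    apply h8.congr'
    filter_upwards [hev] with p hp
    exact (hsub p hp).symm
  · have hc : ContinuousAt (fun p : ℝ => (p^(a-1))⁻¹) 1 := by
      apply ContinuousAt.inv₀ (Real.continuousAt_rpow_const 1 (a-1) (Or.inl one_ne_zero))
      rw [Real.one_rpow]; exact one_ne_zero
    have h1 := hc.tendsto.mono_left (nhdsWithin_le_nhds (s := Iio (1:ℝ)))
    rw [Real.one_rpow, inv_one] at h1
    apply h1.congr'
    filter_upwards [hev] with p hp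
    have h1p : (0:ℝ) < 1 - p := by linarith [hp.2]
    have hX : (1-p)^(b-1) ≠ 0 := (Real.rpow_pos_of_pos h1p _).ne'
    have hY : p^(a-1) ≠ 0 := (Real.rpow_pos_of_pos hp.1 _).ne'
    field_simp


theorem bn_hazard_atTop (a b μ σ : ℝ) (ha : 0 < a) (hb : 0 < b) (hσ : 0 < σ) :
    Tendsto (fun x : ℝ =>
        (bnPdf a b μ σ x / (1 - regInc (Phi ((x-μ)/σ)) a b)) / x)
      atTop (nhds (b / σ^2)) := by
  have hz : Tendsto (fun x : ℝ => (x-μ)/σ) atTop atTop := by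
    have h := (tendsto_atTop_add_const_right atTop (-μ) tendsto_id).atTop_div_const hσ
    simpa [sub_eq_add_neg] using h
  have hPhiz : Tendsto (fun x : ℝ => Phi ((x-μ)/σ)) atTop (𝓝 1) := Phi_tendsto.comp hz
  have hp : Tendsto (fun x : ℝ => Phi ((x-μ)/σ)) atTop (𝓝[<] (1:ℝ)) :=
    tendsto_nhdsWithin_of_tendsto_nhds_of_eventually_within _ hPhiz
      (Eventually.of_forall fun x => Phi_lt_one _)
  have hA : Tendsto (fun x : ℝ => Phi ((x-μ)/σ) ^ (a-1)) atTop (𝓝 1) := by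
    have hc1 : ContinuousAt (fun t : ℝ => t ^ (a-1)) 1 :=
      Real.continuousAt_rpow_const 1 (a-1) (Or.inl one_ne_zero)
    have h := hc1.tendsto.comp hPhiz
    rw [Real.one_rpow] at h
    exact h.congr fun x => rfl
  have hC : Tendsto (fun x : ℝ =>
      ((1 - Phi ((x-μ)/σ))^b / b) /
        ∫ w in (Phi ((x-μ)/σ))..(1:ℝ), w^(a-1) * (1-w)^(b-1)) atTop (𝓝 1) :=
    (betaTail ha hb).comp hp
  have hD : Tendsto (fun x : ℝ =>
      ((1 - Phi ((x-μ)/σ)) / (phi ((x-μ)/σ) / ((x-μ)/σ)))⁻¹) atTop (𝓝 1) := by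
    have h := (mill.comp hz).inv₀ one_ne_zero
    rw [inv_one] at h
    exact h.congr fun x => rfl
  have hE : Tendsto (fun x : ℝ => ((x-μ)/σ)/x) atTop (𝓝 (1/σ)) := by
    have h1 : Tendsto (fun x : ℝ => (1 - μ * x⁻¹)/σ) atTop (𝓝 ((1 - μ*0)/σ)) :=
      (tendsto_const_nhds.sub (tendsto_const_nhds.mul tendsto_inv_atTop_zero)).div_const σ
    rw [mul_zero, sub_zero] at h1
    apply h1.congr'
    filter_upwards [eventually_gt_atTop (0:ℝ)] with x hx
    rw [div_div, mul_comm σ x, ← div_div]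
    congr 1
    rw [sub_div, div_self hx.ne', div_eq_mul_inv]
  have hprod := ((((hA.mul hC).mul hD).mul hE).mul_const (b/σ))
  have hval : (1:ℝ) * 1 * 1 * (1/σ) * (b/σ) = b / σ^2 := by
    rw [one_mul, one_mul, one_mul, div_mul_div_comm, one_mul, sq]
  rw [hval] at hprod
  apply hprod.congr'
  filter_upwards [hz.eventually (eventually_gt_atTop (1:ℝ)), eventually_gt_atTop (0:ℝ)]
    with x hzx hx
  set zz := (x-μ)/σ with hzz
  set pp := Phi zz with hpp
  have hp0 : 0 < pp := Phi_pos _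
  have hp1 : pp < 1 := Phi_lt_one _
  have hq : 0 < 1 - pp := by linarith
  have hT : 0 < ∫ w in pp..(1:ℝ), w^(a-1) * (1-w)^(b-1) := tail_pos ha hb hp0.le hp1
  have hB : 0 < betaF a b := betaF_pos ha hb
  have hφ : 0 < phi zz := phi_pos _
  have hzne : zz ≠ 0 := by positivity
  have hreg : 1 - regInc pp a b
      = (∫ w in pp..(1:ℝ), w^(a-1) * (1-w)^(b-1)) / betaF a b := by
    have hsplit := beta_split ha hb hp0.le hp1.le
    unfold regInc
    rw [eq_div_iff hB.ne', sub_mul, one_mul, div_mul_cancel₀ _ hB.ne']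
    linarith
  have hqb : (1-pp)^b = (1-pp)^(b-1) * (1-pp) := by
    rw [← Real.rpow_add_one hq.ne' (b-1)]
    norm_num
  unfold bnPdf
  rw [hreg, hqb]
  have hX : (1-pp)^(b-1) ≠ 0 := (Real.rpow_pos_of_pos hq _).ne'
  have hY : pp^(a-1) ≠ 0 := (Real.rpow_pos_of_pos hp0 _).ne'
  field_simp
  ring
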